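/- Let n ≥ 4 and 2 ≤ t ≤ 2n − 3 be integers, and let r be the remainder of n − 1 upon division by 1 + t. Then the K_{1,t}-structure connectivity of the BCDC network satisfies κ(B_n; K_{1,t}) ≤ (2n−4)/(1+t) + 1 if 2 ≤ t ≤ n − 3 and r = 1, and κ(B_n; K_{1,t}) ≤ 2⌈(n−1)/(1+t)⌉ otherwise. -/

import Mathlib

open SimpleGraph

/-! ## Structure connectivity -/

/-- The set of vertices covered by a family of subgraphs of `G`. -/
def SimpleGraph.cutVerts {V : Type*} {G : SimpleGraph V} (F : Finset G.Subgraph) : Set V :=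
  ⋃ A ∈ F, A.verts

/-- A family `F` of subgraphs of `G` is a subgraph cut if deleting all vertices of members of `F`
leaves a graph that is disconnected or has at most one vertex. -/
def SimpleGraph.IsSubgraphCut {V : Type*} (G : SimpleGraph V) (F : Finset G.Subgraph) : Prop :=
  ¬ (G.induce (SimpleGraph.cutVerts F)ᶜ).Connected ∨ ((SimpleGraph.cutVerts F)ᶜ : Set V).Subsingleton

/-- An `H`-structure cut of `G`: a subgraph cut all of whose members are isomorphic to `H`. -/
def SimpleGraph.IsStructureCut {V W : Type*} (G : SimpleGraph V) (H : SimpleGraph W)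
    (F : Finset G.Subgraph) : Prop :=
  G.IsSubgraphCut F ∧ ∀ A ∈ F, Nonempty (A.coe ≃g H)

/-- An `H`-substructure cut of `G`: a subgraph cut all of whose members are isomorphic to a
connected subgraph of `H`. -/
def SimpleGraph.IsSubstructureCut {V W : Type*} (G : SimpleGraph V) (H : SimpleGraph W)
    (F : Finset G.Subgraph) : Prop :=
  G.IsSubgraphCut F ∧ ∀ A ∈ F, ∃ K : H.Subgraph, K.Connected ∧ Nonempty (A.coe ≃g K.coe)

/-- The `H`-structure connectivity `κ(G; H)`. -/
noncomputable def SimpleGraph.structConn {V W : Type*} (G : SimpleGraph V) (H : SimpleGraph W) : ℕ :=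
  sInf {k | ∃ F : Finset G.Subgraph, G.IsStructureCut H F ∧ F.card = k}

/-- The `H`-substructure connectivity `κˢ(G; H)`. -/
noncomputable def SimpleGraph.substructConn {V W : Type*} (G : SimpleGraph V) (H : SimpleGraph W) : ℕ :=
  sInf {k | ∃ F : Finset G.Subgraph, G.IsSubstructureCut H F ∧ F.card = k}

/-- The star `K_{1,t}` with center `0` and `t` leaves. -/
def starGraph (t : ℕ) : SimpleGraph (Fin (t + 1)) :=
  SimpleGraph.fromRel (fun i _ => i = 0)
/-! ## The crossed cube and the BCDC network -/

/-- Binary strings of length `n` (`CQVertex (n+1) = Bool × CQVertex n`,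
the first component being the leading bit `x_n`). -/
def CQVertex : ℕ → Type
  | 0 => Unit
  | n + 1 => Bool × CQVertex n

/-- The `i`-th bit `x_i` of a binary string `x = x_{n-1} … x_1 x_0`. -/
def CQbit : (n : ℕ) → CQVertex n → ℕ → Bool
  | 0, _, _ => false
  | n + 1, x, i => if i = n then x.1 else CQbit n x.2 i

/-- Two binary strings `x = x_1 x_0` and `y = y_1 y_0` are pair related iff
`(x, y) ∈ {(00,00), (10,10), (01,11), (11,01)}`. -/
def pairRel (x1 x0 y1 y0 : Bool) : Prop :=
  (x0 = false ∧ y0 = false ∧ y1 = x1) ∨ (x0 = true ∧ y0 = true ∧ y1 = !x1)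

/-- The adjacency relation of the `n`-dimensional crossed cube: `CQ_1 = K_2`, and
`u = 0u_{n-2}…u_0`, `v = 1v_{n-2}…v_0` are adjacent in `CQ_n` iff (i) `u_{n-2} = v_{n-2}`
whenever `n` is even, and (ii) `u_{2i+1}u_{2i} ∼ v_{2i+1}v_{2i}` for all `0 ≤ i < ⌊(n-1)/2⌋`. -/
def CQrel : (n : ℕ) → CQVertex n → CQVertex n → Prop
  | 0, _, _ => False
  | n + 1, u, v =>
      (u.1 = v.1 ∧ CQrel n u.2 v.2) ∨
      (u.1 ≠ v.1 ∧
        ((n + 1) % 2 = 0 → CQbit n u.2 (n - 1) = CQbit n v.2 (n - 1)) ∧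
        ∀ i < n / 2, pairRel (CQbit n u.2 (2 * i + 1)) (CQbit n u.2 (2 * i))
          (CQbit n v.2 (2 * i + 1)) (CQbit n v.2 (2 * i)))

/-- The `n`-dimensional crossed cube `CQ_n`. -/
def crossedCube (n : ℕ) : SimpleGraph (CQVertex n) :=
  SimpleGraph.fromRel (CQrel n)

/-- The `n`-dimensional BCDC network `B_n`: the line graph of the crossed cube `CQ_n`. -/
def BCDC (n : ℕ) : SimpleGraph (crossedCube n).edgeSet :=
  (crossedCube n).lineGraph

/-! In the line graph `L(G)` of a `d`-regular graph `G`, the neighbours of the vertex `e = zw` are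
the other edges at `z` and at `w`, and the edges at one vertex of `G` form a clique of `L(G)`.
Covering these `2(d - 1)` neighbours by copies of `K_{1,t}` that avoid `e` isolates `e`.
* If `t + 2 ≤ d`, the edges at each end are covered by `⌈(d - 1)/(t + 1)⌉` stars inside their
  clique.
* If `d - 2 ≤ t ≤ 2d - 3`, one star per end suffices: centre it at an edge `za` (resp. `wb`) and
  pad its leaves with edges at `a` (resp. `b`).
* If `t + 1 ∣ d - 2` and `z w b a` is a 4-cycle, the edges at `z` other than `zw`, `za` take
  `(d - 2)/(t + 1)` stars, likewise at `w`, and one more star centred at `ab` covers `za` and `wb`.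

The crossed cube `CQ_n` is `n`-regular, and its two lowest dimensions commute, so every vertex lies
on a 4-cycle. -/

theorem pairRel_iff {x1 x0 y1 y0 : Bool} : pairRel x1 x0 y1 y0 ↔ y0 = x0 ∧ y1 = xor x1 x0 := by
  cases x1 <;> cases x0 <;> cases y1 <;> cases y0 <;> simp [pairRel]

namespace CQVertex

theorem ext_bits :
    ∀ {n : ℕ} {x y : CQVertex n}, (∀ i < n, CQbit n x i = CQbit n y i) → x = y
  | 0, _, _, _ => rfl
  | n + 1, x, y, h => by
    have htop : x.1 = y.1 := by simpa [CQbit] using h n n.lt_succ_self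
    have hlow : x.2 = y.2 := ext_bits fun i hi => by
      simpa [CQbit, hi.ne] using h i (by omega)
    exact Prod.ext htop hlow

theorem nonempty : ∀ n : ℕ, Nonempty (CQVertex n)
  | 0 => ⟨()⟩
  | n + 1 => let ⟨x⟩ := nonempty n; ⟨(false, x)⟩

/-- The partner in `CQ^1_n` of a vertex of `CQ^0_n` (and conversely): bit `2i+1` becomes
`x_{2i+1} xor x_{2i}`, every even bit is kept. -/
def cross : (n : ℕ) → CQVertex n → CQVertex n
  | 0, x => x
  | n + 1, x => (if n % 2 = 1 then xor x.1 (CQbit n x.2 (n - 1)) else x.1, cross n x.2)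

theorem CQbit_cross : ∀ {n : ℕ} (x : CQVertex n) {i : ℕ}, i < n →
    CQbit n (cross n x) i =
      if i % 2 = 1 then xor (CQbit n x i) (CQbit n x (i - 1)) else CQbit n x i
  | 0, _, _, h => absurd h (Nat.not_lt_zero _)
  | n + 1, x, i, hi => by
    rcases Nat.lt_succ_iff_lt_or_eq.1 hi with hi | rfl
    · have : i - 1 ≠ n := by omega
      simp [CQbit, cross, hi.ne, this, CQbit_cross x.2 hi]
    · have : i - 1 ≠ i ∨ i % 2 = 0 := by omega
      rcases this with h | h <;> simp [CQbit, cross, h]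

theorem cross_cross {n : ℕ} (x : CQVertex n) : cross n (cross n x) = x := by
  refine ext_bits fun i hi => ?_
  rw [CQbit_cross _ hi, CQbit_cross _ hi]
  split_ifs with h
  · rw [CQbit_cross _ (by omega), if_neg (by omega), Bool.xor_assoc, Bool.xor_self,
      Bool.xor_false]
  · rfl

/-- Condition (i) ∧ (ii) of the definition of `CQ_{n+1}` says exactly that `y` is `cross n x`. -/
theorem crossCond_iff {n : ℕ} {x y : CQVertex n} :
    (((n + 1) % 2 = 0 → CQbit n x (n - 1) = CQbit n y (n - 1)) ∧
      ∀ i < n / 2, pairRel (CQbit n x (2 * i + 1)) (CQbit n x (2 * i))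
        (CQbit n y (2 * i + 1)) (CQbit n y (2 * i))) ↔ y = cross n x := by
  simp only [pairRel_iff]
  constructor
  · rintro ⟨htop, hpair⟩
    refine ext_bits fun i hi => ?_
    rw [CQbit_cross _ hi]
    obtain ⟨j, rfl | rfl⟩ := Nat.even_or_odd' i
    · rw [if_neg (by omega)]
      by_cases hj : 2 * j + 1 < n
      · exact (hpair j (by omega)).1
      · have htop := htop (by omega)
        rwa [show n - 1 = 2 * j by omega, eq_comm] at htop
    · rw [if_pos (by omega), Nat.add_sub_cancel]
      exact (hpair j (by omega)).2
  · rintro rfl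
    refine ⟨fun h => ?_, fun i hi => ?_⟩
    · rw [CQbit_cross _ (by omega), if_neg (by omega)]
    · rw [CQbit_cross _ (by omega), CQbit_cross _ (by omega), if_neg (by omega),
        if_pos (by omega), Nat.add_sub_cancel]
      exact ⟨rfl, rfl⟩

/-- The neighbour of `x` in dimension `k`: the highest bit in which it differs from `x` is
bit `k`. -/
def nbr : (n : ℕ) → CQVertex n → ℕ → CQVertex n
  | 0, x, _ => x
  | n + 1, x, k => if k < n then (x.1, nbr n x.2 k) else (!x.1, cross n x.2)

-- Stated at type `CQVertex (n + 1)` rather than `Bool × CQVertex n`, so that `rw` can use it.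
theorem mk_eq_mk {n : ℕ} {b c : Bool} {x y : CQVertex n} :
    @Eq (CQVertex (n + 1)) (b, x) (c, y) ↔ b = c ∧ x = y := Prod.mk_inj

theorem nbr_succ_of_lt {n k : ℕ} (b : Bool) (x : CQVertex n) (h : k < n) :
    nbr (n + 1) (b, x) k = (b, nbr n x k) := if_pos h

theorem nbr_succ_self {n : ℕ} (b : Bool) (x : CQVertex n) :
    nbr (n + 1) (b, x) n = (!b, cross n x) := if_neg n.lt_irrefl

theorem CQrel_iff : ∀ {n : ℕ} {u v : CQVertex n}, CQrel n u v ↔ ∃ k < n, v = nbr n u k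
  | 0, _, _ => by simp [CQrel]
  | n + 1, (b, x), (c, y) => by
    have hsplit : (∃ k < n + 1, @Eq (CQVertex (n + 1)) (c, y) (nbr (n + 1) (b, x) k)) ↔
        (∃ k < n, c = b ∧ y = nbr n x k) ∨ (c = !b ∧ y = cross n x) := by
      constructor
      · rintro ⟨k, hk, h⟩
        rcases Nat.lt_succ_iff_lt_or_eq.1 hk with hk | rfl
        · exact Or.inl ⟨k, hk, by rwa [nbr_succ_of_lt _ _ hk, mk_eq_mk] at h⟩
        · exact Or.inr (by rwa [nbr_succ_self, mk_eq_mk] at h)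
      · rintro (⟨k, hk, h⟩ | h)
        · exact ⟨k, k.lt_succ_of_lt hk, by rwa [nbr_succ_of_lt _ _ hk, mk_eq_mk]⟩
        · exact ⟨n, n.lt_succ_self, by rwa [nbr_succ_self, mk_eq_mk]⟩
    refine Iff.trans ?_ hsplit.symm
    show (b = c ∧ CQrel n x y ∨ b ≠ c ∧ _) ↔ _
    rw [crossCond_iff, CQrel_iff]
    cases b <;> cases c <;> simp

theorem nbr_nbr : ∀ {n : ℕ} (x : CQVertex n) {k : ℕ}, k < n → nbr n (nbr n x k) k = x
  | 0, _, _, h => absurd h (Nat.not_lt_zero _)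
  | n + 1, (b, x), k, hk => by
    rcases Nat.lt_succ_iff_lt_or_eq.1 hk with h | rfl
    · rw [nbr_succ_of_lt _ _ h, nbr_succ_of_lt _ _ h, nbr_nbr x h]
    · rw [nbr_succ_self, nbr_succ_self, Bool.not_not, cross_cross]

theorem nbr_ne : ∀ {n : ℕ} (x : CQVertex n) {k : ℕ}, k < n → nbr n x k ≠ x
  | 0, _, _, h => absurd h (Nat.not_lt_zero _)
  | n + 1, (b, x), k, hk => by
    rcases Nat.lt_succ_iff_lt_or_eq.1 hk with h | rfl
    · rw [nbr_succ_of_lt _ _ h]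
      exact fun he => nbr_ne x h (mk_eq_mk.1 he).2
    · rw [nbr_succ_self]
      exact fun he => Bool.not_ne_self b (mk_eq_mk.1 he).1

theorem nbr_injOn : ∀ {n : ℕ} (x : CQVertex n), Set.InjOn (nbr n x) (Set.Iio n)
  | 0, _, k, hk, _, _, _ => absurd hk (Nat.not_lt_zero _)
  | n + 1, (b, x), k, hk, l, hl, h => by
    rcases Nat.lt_succ_iff_lt_or_eq.1 hk with hk | rfl <;>
      rcases Nat.lt_succ_iff_lt_or_eq.1 hl with hl | rfl
    · rw [nbr_succ_of_lt _ _ hk, nbr_succ_of_lt _ _ hl, mk_eq_mk] at h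
      exact nbr_injOn x hk hl h.2
    · rw [nbr_succ_of_lt _ _ hk, nbr_succ_self, mk_eq_mk] at h
      cases b <;> simp at h
    · rw [nbr_succ_of_lt _ _ hl, nbr_succ_self, mk_eq_mk] at h
      cases b <;> simp at h
    · rfl

theorem nbr_one_nbr_zero : ∀ {n : ℕ} (x : CQVertex n), 2 ≤ n →
    nbr n (nbr n x 0) 1 = nbr n (nbr n x 1) 0
  | 2, (b, c, ()), _ => by cases b <;> cases c <;> rfl
  | n + 3, (b, x), _ => by
    rw [nbr_succ_of_lt _ _ (by omega : 0 < n + 2), nbr_succ_of_lt _ _ (by omega : 1 < n + 2),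
      nbr_succ_of_lt _ _ (by omega : 1 < n + 2), nbr_succ_of_lt _ _ (by omega : 0 < n + 2),
      nbr_one_nbr_zero x (by omega)]

end CQVertex

open CQVertex in
theorem crossedCube_adj_iff {n : ℕ} {u v : CQVertex n} :
    (crossedCube n).Adj u v ↔ ∃ k < n, v = nbr n u k := by
  rw [crossedCube, SimpleGraph.fromRel_adj, CQrel_iff, CQrel_iff]
  constructor
  · rintro ⟨-, h | ⟨k, hk, rfl⟩⟩
    · exact h
    · exact ⟨k, hk, (nbr_nbr v hk).symm⟩
  · rintro ⟨k, hk, rfl⟩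
    exact ⟨(nbr_ne u hk).symm, Or.inl ⟨k, hk, rfl⟩⟩

theorem crossedCube_adj_nbr {n k : ℕ} (x : CQVertex n) (hk : k < n) :
    (crossedCube n).Adj x (CQVertex.nbr n x k) :=
  crossedCube_adj_iff.2 ⟨k, hk, rfl⟩

theorem crossedCube_neighborSet {n : ℕ} (x : CQVertex n) :
    (crossedCube n).neighborSet x = CQVertex.nbr n x '' Set.Iio n := by
  ext v
  simp [crossedCube_adj_iff, eq_comm]

noncomputable instance {n : ℕ} : (crossedCube n).LocallyFinite := fun x =>
  (crossedCube_neighborSet x ▸ (Set.finite_Iio n).image _).fintype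

theorem crossedCube_isRegularOfDegree (n : ℕ) : (crossedCube n).IsRegularOfDegree n := by
  intro x
  rw [← SimpleGraph.card_neighborSet_eq_degree, ← Nat.card_eq_fintype_card,
    Nat.card_coe_set_eq, crossedCube_neighborSet, (CQVertex.nbr_injOn x).ncard_image,
    Set.ncard_Iio_nat]

open CQVertex in
theorem crossedCube_exists_square {n : ℕ} (hn : 2 ≤ n) :
    ∃ z w a b : CQVertex n, (crossedCube n).Adj z w ∧ (crossedCube n).Adj z a ∧
      (crossedCube n).Adj w b ∧ (crossedCube n).Adj a b ∧ a ≠ w ∧ b ≠ z := by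
  obtain ⟨x⟩ := CQVertex.nonempty n
  have h01 : nbr n x 1 ≠ nbr n x 0 := fun h =>
    one_ne_zero (nbr_injOn x (show 1 < n by omega) (show 0 < n by omega) h)
  refine ⟨x, nbr n x 0, nbr n x 1, nbr n (nbr n x 0) 1, crossedCube_adj_nbr _ (by omega),
    crossedCube_adj_nbr _ (by omega), crossedCube_adj_nbr _ (by omega), ?_, h01, fun h => ?_⟩
  · rw [nbr_one_nbr_zero x hn]
    exact crossedCube_adj_nbr _ (by omega)
  · have h1 := nbr_nbr (nbr n x 0) (show 1 < n by omega)
    rw [h] at h1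
    exact h01 h1

/-- Greedy: each block is a `k`-subset of `K` containing `min k s.card` points of `s`. Covering
only a part `s` of `K` is what lets the induction go through. -/
theorem Finset.exists_cover_subsets_card_eq {α : Type*} {K : Finset α} {k : ℕ}
    (hk : 0 < k) (hK : k ≤ K.card) (s : Finset α) (hs : s ⊆ K) :
    ∃ P : Finset (Finset α), P.card ≤ (s.card + k - 1) / k ∧
      (∀ B ∈ P, B ⊆ K ∧ B.card = k) ∧ ∀ x ∈ s, ∃ B ∈ P, x ∈ B := by
  classical
  induction s using Finset.strongInduction with
  | H s ih =>
  rcases s.eq_empty_or_nonempty with rfl | hne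
  · exact ⟨∅, by simp, by simp, by simp⟩
  obtain ⟨T, hTs, hT⟩ := Finset.exists_subset_card_eq (min_le_right k s.card)
  obtain ⟨B, hTB, hBK, hB⟩ :=
    Finset.exists_subsuperset_card_eq (hTs.trans hs) (hT ▸ min_le_left _ _) hK
  have hs0 : 0 < s.card := hne.card_pos
  have hTne : T.Nonempty := Finset.card_pos.1 (by omega)
  obtain ⟨P, hPcard, hPK, hPcov⟩ :=
    ih (s \ T) (Finset.sdiff_ssubset hTs hTne) (Finset.sdiff_subset.trans hs)
  refine ⟨insert B P, ?_, ?_, ?_⟩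
  · rw [Finset.card_sdiff_of_subset hTs, hT] at hPcard
    have hstep : (s.card - min k s.card + k - 1) / k + 1 ≤ (s.card + k - 1) / k := by
      rcases le_or_gt s.card k with h | h
      · rw [min_eq_right h, Nat.sub_self, Nat.div_eq_of_lt (by omega), Nat.le_div_iff_mul_le hk]
        omega
      · rw [min_eq_left h.le, ← Nat.add_div_right _ hk]
        exact Nat.div_le_div_right (by omega)
    exact (Finset.card_insert_le _ _).trans (by omega)
  · simpa [Finset.forall_mem_insert] using ⟨⟨hBK, hB⟩, hPK⟩
  · intro x hx
    by_cases hxT : x ∈ T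
    · exact ⟨B, Finset.mem_insert_self _ _, hTB hxT⟩
    · obtain ⟨B', hB', hxB'⟩ := hPcov x (Finset.mem_sdiff.2 ⟨hx, hxT⟩)
      exact ⟨B', Finset.mem_insert_of_mem hB', hxB'⟩

namespace SimpleGraph

variable {V W : Type*} {G : SimpleGraph V}

theorem mem_cutVerts {F : Finset G.Subgraph} {v : V} :
    v ∈ cutVerts F ↔ ∃ A ∈ F, v ∈ A.verts := by
  simp [cutVerts]

theorem verts_subset_cutVerts {F : Finset G.Subgraph} {A : G.Subgraph} (hA : A ∈ F) :
    A.verts ⊆ cutVerts F :=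
  fun _ hv => mem_cutVerts.2 ⟨A, hA, hv⟩

theorem cutVerts_union [DecidableEq G.Subgraph] (F₁ F₂ : Finset G.Subgraph) :
    cutVerts (F₁ ∪ F₂) = cutVerts F₁ ∪ cutVerts F₂ := by
  ext v
  simp only [mem_cutVerts, Finset.mem_union, Set.mem_union, or_and_right, exists_or]

theorem cutVerts_insert [DecidableEq G.Subgraph] (A : G.Subgraph) (F : Finset G.Subgraph) :
    cutVerts (insert A F) = A.verts ∪ cutVerts F := by
  ext v
  simp [mem_cutVerts]

theorem isSubgraphCut_of_neighbors_mem {F : Finset G.Subgraph} {v : V} (hv : v ∉ cutVerts F)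
    (hN : ∀ u, G.Adj v u → u ∈ cutVerts F) : G.IsSubgraphCut F := by
  rw [IsSubgraphCut, or_iff_not_imp_right]
  intro hnt hconn
  have : Nontrivial ((cutVerts F)ᶜ : Set V) :=
    Set.nontrivial_coe_sort.2 (Set.not_subsingleton_iff.1 hnt)
  exact hconn.preconnected.not_isIsolated ⟨v, hv⟩ fun u huv => u.2 (hN u huv)

theorem structConn_le_card_of_neighbors_mem {H : SimpleGraph W} {F : Finset G.Subgraph}
    (hF : ∀ A ∈ F, Nonempty (A.coe ≃g H)) {v : V} (hv : v ∉ cutVerts F)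
    (hN : ∀ u, G.Adj v u → u ∈ cutVerts F) : G.structConn H ≤ F.card :=
  Nat.sInf_le ⟨F, ⟨isSubgraphCut_of_neighbors_mem hv hN, hF⟩, rfl⟩

theorem exists_starGraph_subgraph {c : V} {L : Finset V} (hc : c ∉ L)
    (hadj : ∀ u ∈ L, G.Adj c u) :
    ∃ A : G.Subgraph, A.verts = insert c ↑L ∧
      Nonempty (A.coe ≃g _root_.starGraph L.card) := by
  let leaf : Fin L.card → V := fun i => L.equivFin.symm i
  have hleaf : Set.range leaf = L := by
    ext v
    simp only [Set.mem_range, leaf, Finset.mem_coe]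
    exact ⟨fun ⟨i, hi⟩ => hi ▸ (L.equivFin.symm i).2,
      fun hv => ⟨L.equivFin ⟨v, hv⟩, by simp⟩⟩
  let φ : Fin (L.card + 1) → V := Fin.cons c leaf
  have hcenter : ∀ j : Fin L.card, G.Adj (φ 0) (φ j.succ) := by
    intro j
    simpa [φ] using hadj _ (hleaf ▸ Set.mem_range_self j : leaf j ∈ (L : Set V))
  let f : _root_.starGraph L.card →g G :=
    { toFun := φ
      map_rel' := by
        rintro i j ⟨hij, rfl | rfl⟩
        · cases j using Fin.cases with
          | zero => exact absurd rfl hij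
          | succ j => exact hcenter j
        · cases i using Fin.cases with
          | zero => exact absurd rfl hij
          | succ i => exact (hcenter i).symm }
  have hf : Function.Injective f :=
    Fin.cons_injective_iff.2
      ⟨by rwa [hleaf], fun i j h => L.equivFin.symm.injective (Subtype.ext h)⟩
  let e : Copy (_root_.starGraph L.card) G := ⟨f, hf⟩
  refine ⟨e.toSubgraph, ?_, ⟨e.isoToSubgraph.symm⟩⟩
  simp [e, f, φ, Fin.range_cons, hleaf]

theorem exists_starGraph_subgraph_between {c : V} {S U : Finset V} {t : ℕ}
    (hU : ∀ u ∈ U, G.Adj c u) (hSU : S ⊆ U) (hS : S.card ≤ t) (htU : t ≤ U.card) :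
    ∃ A : G.Subgraph, Nonempty (A.coe ≃g _root_.starGraph t) ∧
      insert c ↑S ⊆ A.verts ∧ A.verts ⊆ insert c ↑U := by
  obtain ⟨L, hSL, hLU, rfl⟩ := Finset.exists_subsuperset_card_eq hSU hS htU
  obtain ⟨A, hA, hiso⟩ :=
    exists_starGraph_subgraph (fun hc => (hU c (hLU hc)).ne rfl) fun u hu => hU u (hLU hu)
  refine ⟨A, hiso, ?_, ?_⟩ <;> rw [hA] <;> gcongr

theorem IsClique.exists_starGraph_cover {K : Finset V} (hK : G.IsClique (K : Set V)) {t : ℕ}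
    (ht : t + 1 ≤ K.card) :
    ∃ F : Finset G.Subgraph, F.card ≤ (K.card + t) / (t + 1) ∧
      (∀ A ∈ F, Nonempty (A.coe ≃g _root_.starGraph t)) ∧ cutVerts F = K := by
  classical
  obtain ⟨P, hPcard, hPK, hPcov⟩ :=
    Finset.exists_cover_subsets_card_eq t.succ_pos ht K subset_rfl
  have hstar : ∀ B : Finset V, B ⊆ K ∧ B.card = t + 1 →
      ∃ A : G.Subgraph, A.verts = B ∧ Nonempty (A.coe ≃g _root_.starGraph t) := by
    rintro B ⟨hBK, hB⟩
    obtain ⟨c, hc⟩ := Finset.card_pos.1 (by omega : 0 < B.card)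
    obtain ⟨A, hA, hiso⟩ := exists_starGraph_subgraph (B.notMem_erase c) fun u hu =>
      hK (hBK hc) (hBK (Finset.mem_of_mem_erase hu)) (Finset.ne_of_mem_erase hu).symm
    rw [Finset.card_erase_of_mem hc, hB, Nat.add_sub_cancel] at hiso
    exact ⟨A, by rw [hA, ← Finset.coe_insert, Finset.insert_erase hc], hiso⟩
  choose! star hstar_verts hstar_iso using hstar
  refine ⟨P.image star, Finset.card_image_le.trans (by simpa using hPcard), ?_, ?_⟩
  · simp only [Finset.mem_image, forall_exists_index, and_imp]
    rintro _ B hB rfl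
    exact hstar_iso B (hPK B hB)
  · ext v
    simp only [mem_cutVerts, Finset.mem_image, exists_exists_and_eq_and, Finset.mem_coe]
    constructor
    · rintro ⟨B, hB, hv⟩
      rw [hstar_verts B (hPK B hB)] at hv
      exact (hPK B hB).1 hv
    · intro hv
      obtain ⟨B, hB, hvB⟩ := hPcov v hv
      exact ⟨B, hB, by rwa [hstar_verts B (hPK B hB)]⟩

section LineGraph

variable [DecidableEq V] [G.LocallyFinite]

noncomputable def edgesAt (G : SimpleGraph V) [G.LocallyFinite] (x : V) : Finset G.edgeSet :=
  (G.incidenceFinset x).preimage (↑) Subtype.val_injective.injOn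

@[simp]
theorem mem_edgesAt {x : V} {f : G.edgeSet} : f ∈ G.edgesAt x ↔ x ∈ (f : Sym2 V) := by
  simp [edgesAt, incidenceSet, f.2]

theorem card_edgesAt (x : V) : (G.edgesAt x).card = G.degree x := by
  classical
  rw [edgesAt, Finset.card_preimage, Finset.filter_true_of_mem, card_incidenceFinset_eq_degree]
  intro f hf
  exact ⟨⟨f, G.incidenceSet_subset x ((G.mem_incidenceFinset x f).1 hf)⟩, rfl⟩

theorem isClique_edgesAt (x : V) : G.lineGraph.IsClique (G.edgesAt x : Set G.edgeSet) :=
  fun _ he _ hf hne => lineGraph_adj_iff_exists.2 ⟨hne, x, mem_edgesAt.1 he, mem_edgesAt.1 hf⟩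

theorem edgesAt_inter_edgesAt {x y : V} (h : G.Adj x y) :
    G.edgesAt x ∩ G.edgesAt y = {⟨s(x, y), h⟩} := by
  ext f
  simp [Subtype.ext_iff, Sym2.mem_and_mem_iff h.ne]

theorem lineGraph_adj_mk_iff {x y : V} (h : G.Adj x y) {f : G.edgeSet} :
    G.lineGraph.Adj ⟨s(x, y), h⟩ f ↔
      f ∈ (G.edgesAt x ∪ G.edgesAt y).erase ⟨s(x, y), h⟩ := by
  simp [lineGraph_adj_iff_exists, ne_comm]

theorem lineGraph_structConn_le_card {H : SimpleGraph W} {z w : V} (hzw : G.Adj z w)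
    {F : Finset G.lineGraph.Subgraph} (hF : ∀ A ∈ F, Nonempty (A.coe ≃g H))
    (he : ⟨s(z, w), hzw⟩ ∉ cutVerts F)
    (hz : ↑((G.edgesAt z).erase ⟨s(z, w), hzw⟩) ⊆ cutVerts F)
    (hw : ↑((G.edgesAt w).erase ⟨s(z, w), hzw⟩) ⊆ cutVerts F) :
    G.lineGraph.structConn H ≤ F.card :=
  structConn_le_card_of_neighbors_mem hF he fun f hf => by
    rw [lineGraph_adj_mk_iff, Finset.erase_union_distrib, Finset.mem_union] at hf
    exact hf.elim (fun h => hz h) (fun h => hw h)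

variable {d t : ℕ} {z w a b : V}

theorem exists_starGraph_cover_of_subset_edgesAt {x : V} {K : Finset G.edgeSet}
    (hK : K ⊆ G.edgesAt x) (ht : t + 1 ≤ K.card) :
    ∃ F : Finset G.lineGraph.Subgraph, F.card ≤ (K.card + t) / (t + 1) ∧
      (∀ A ∈ F, Nonempty (A.coe ≃g _root_.starGraph t)) ∧ cutVerts F = K :=
  ((isClique_edgesAt x).subset (Finset.coe_subset.2 hK)).exists_starGraph_cover ht

theorem exists_starGraph_lineGraph_of_square (hG : G.IsRegularOfDegree d) (hza : G.Adj z a)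
    (hwb : G.Adj w b) (hab : G.Adj a b) (haw : a ≠ w) (hbz : b ≠ z) (ht : 2 ≤ t)
    (htd : t + 1 ≤ d) :
    ∃ X : G.lineGraph.Subgraph, Nonempty (X.coe ≃g _root_.starGraph t) ∧
      ⟨s(z, a), hza⟩ ∈ X.verts ∧ ⟨s(w, b), hwb⟩ ∈ X.verts ∧
      X.verts ⊆ insert ⟨s(a, b), hab⟩ ↑(G.edgesAt a ∪ G.edgesAt b) := by
  set c : G.edgeSet := ⟨s(a, b), hab⟩
  obtain ⟨X, hX, hX_sub, hX_sup⟩ := exists_starGraph_subgraph_between (c := c)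
    (S := {⟨s(z, a), hza⟩, ⟨s(w, b), hwb⟩}) (U := (G.edgesAt a ∪ G.edgesAt b).erase c)
    (t := t)
    (fun f hf => (lineGraph_adj_mk_iff hab).2 hf)
    (by simp [Finset.insert_subset_iff, c, Subtype.ext_iff, hbz.symm, haw.symm, hza.ne, hwb.ne])
    ((Finset.card_le_two).trans ht)
    (by
      refine le_trans ?_ (Finset.card_le_card
        (Finset.erase_subset_erase c (Finset.subset_union_left (s₂ := G.edgesAt b))))
      rw [Finset.card_erase_of_mem (by simp [c]), card_edgesAt, hG a]
      omega)
  refine ⟨X, hX, hX_sub (by simp), hX_sub (by simp), hX_sup.trans ?_⟩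
  gcongr
  exact Finset.erase_subset _ _

theorem exists_starGraph_cover_erase_edgesAt_of_dvd (hG : G.IsRegularOfDegree d)
    (hza : G.Adj z a) {e : G.edgeSet} (hez : e ∈ G.edgesAt z) (hea : e ≠ ⟨s(z, a), hza⟩)
    (htd : t + 3 ≤ d) (hdvd : t + 1 ∣ d - 2) :
    ∃ F : Finset G.lineGraph.Subgraph, F.card ≤ (d - 2) / (t + 1) ∧
      (∀ A ∈ F, Nonempty (A.coe ≃g _root_.starGraph t)) ∧
      cutVerts F = ↑(((G.edgesAt z).erase ⟨s(z, a), hza⟩).erase e) := by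
  have hcard : (((G.edgesAt z).erase ⟨s(z, a), hza⟩).erase e).card = d - 2 := by
    rw [Finset.card_erase_of_mem (Finset.mem_erase.2 ⟨hea, hez⟩),
      Finset.card_erase_of_mem (by simp), card_edgesAt, hG z]
    omega
  have hdiv : (d - 2 + t) / (t + 1) = (d - 2) / (t + 1) := by
    obtain ⟨m, hm⟩ := hdvd
    rw [hm, Nat.mul_add_div t.succ_pos, Nat.mul_div_cancel_left _ t.succ_pos,
      Nat.div_eq_of_lt t.lt_succ_self, add_zero]
  rw [← hdiv, ← hcard]
  exact exists_starGraph_cover_of_subset_edgesAt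
    ((Finset.erase_subset _ _).trans (Finset.erase_subset _ _)) (by omega)

theorem exists_starGraph_lineGraph_superset_erase_edgesAt (hG : G.IsRegularOfDegree d)
    (hza : G.Adj z a) {e : G.edgeSet} (hez : e ∈ G.edgesAt z) (hea : e ∉ G.edgesAt a)
    (ht : d - 2 ≤ t) (ht' : t ≤ 2 * d - 3) :
    ∃ A : G.lineGraph.Subgraph, Nonempty (A.coe ≃g _root_.starGraph t) ∧
      ↑((G.edgesAt z).erase e) ⊆ A.verts ∧ e ∉ A.verts := by
  set c : G.edgeSet := ⟨s(z, a), hza⟩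
  have hcz : c ∈ G.edgesAt z := by simp [c]
  have hec : e ≠ c := fun h => hea (h ▸ by simp [c])
  set S := ((G.edgesAt z).erase c).erase e
  set U := ((G.edgesAt z ∪ G.edgesAt a).erase c).erase e
  have hScard : S.card = d - 2 := by
    rw [Finset.card_erase_of_mem (Finset.mem_erase.2 ⟨hec, hez⟩), Finset.card_erase_of_mem hcz,
      card_edgesAt, hG z]
    omega
  have hUcard : U.card = 2 * d - 3 := by
    have h := Finset.card_union_add_card_inter (G.edgesAt z) (G.edgesAt a)
    rw [edgesAt_inter_edgesAt hza, Finset.card_singleton, card_edgesAt, card_edgesAt, hG z,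
      hG a] at h
    rw [Finset.card_erase_of_mem (Finset.mem_erase.2 ⟨hec, Finset.mem_union_left _ hez⟩),
      Finset.card_erase_of_mem (Finset.mem_union_left _ hcz)]
    omega
  obtain ⟨A, hiso, hSA, hAU⟩ :=
    exists_starGraph_subgraph_between (c := c) (S := S) (U := U) (t := t)
    (fun f hf => (lineGraph_adj_mk_iff hza).2 (Finset.mem_of_mem_erase hf))
    (Finset.erase_subset_erase _ (Finset.erase_subset_erase _ Finset.subset_union_left))
    (by omega) (by omega)
  refine ⟨A, hiso, fun f hf => ?_, fun he => ?_⟩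
  · rw [Finset.mem_coe, Finset.mem_erase] at hf
    by_cases hfc : f = c
    · rw [hfc]
      exact hSA (Set.mem_insert c _)
    · exact hSA (Set.mem_insert_of_mem _
        (Finset.mem_erase.2 ⟨hf.1, Finset.mem_erase.2 ⟨hfc, hf.2⟩⟩))
  · rcases hAU he with h | h
    · exact hec h
    · exact (Finset.mem_erase.1 h).1 rfl

end LineGraph

section Cases

variable [G.LocallyFinite] {d t : ℕ} {z w a b : V}

theorem lineGraph_structConn_starGraph_le_of_adj (hG : G.IsRegularOfDegree d) (hzw : G.Adj z w)
    (ht : t + 2 ≤ d) :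
    G.lineGraph.structConn (_root_.starGraph t) ≤ 2 * ((d - 1 + t) / (t + 1)) := by
  classical
  set e : G.edgeSet := ⟨s(z, w), hzw⟩
  have hcover : ∀ x, e ∈ G.edgesAt x → ∃ F : Finset G.lineGraph.Subgraph,
      F.card ≤ (d - 1 + t) / (t + 1) ∧
        (∀ A ∈ F, Nonempty (A.coe ≃g _root_.starGraph t)) ∧
        cutVerts F = ↑((G.edgesAt x).erase e) := by
    intro x hx
    have hcard : ((G.edgesAt x).erase e).card = d - 1 := by
      rw [Finset.card_erase_of_mem hx, card_edgesAt, hG x]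
    rw [← hcard]
    exact exists_starGraph_cover_of_subset_edgesAt (Finset.erase_subset _ _) (by omega)
  obtain ⟨Fz, hFz, hFz_star, hFz_verts⟩ := hcover z (by simp [e])
  obtain ⟨Fw, hFw, hFw_star, hFw_verts⟩ := hcover w (by simp [e])
  calc G.lineGraph.structConn (_root_.starGraph t) ≤ (Fz ∪ Fw).card := by
        refine lineGraph_structConn_le_card hzw ?_ ?_ ?_ ?_
        · simpa [or_imp, forall_and] using ⟨hFz_star, hFw_star⟩
        · simp [cutVerts_union, hFz_verts, hFw_verts, e]
        · rw [cutVerts_union, hFz_verts]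
          exact Set.subset_union_left
        · rw [cutVerts_union, hFw_verts]
          exact Set.subset_union_right
    _ ≤ Fz.card + Fw.card := Finset.card_union_le _ _
    _ ≤ 2 * ((d - 1 + t) / (t + 1)) := by omega

theorem lineGraph_structConn_starGraph_le_two (hG : G.IsRegularOfDegree d) (hzw : G.Adj z w)
    (hza : G.Adj z a) (hwb : G.Adj w b) (haw : a ≠ w) (hbz : b ≠ z) (ht : d - 2 ≤ t)
    (ht' : t ≤ 2 * d - 3) :
    G.lineGraph.structConn (_root_.starGraph t) ≤ 2 := by
  classical
  set e : G.edgeSet := ⟨s(z, w), hzw⟩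
  obtain ⟨Az, hAz, hAz_verts, heAz⟩ := exists_starGraph_lineGraph_superset_erase_edgesAt hG hza
    (e := e) (by simp [e]) (by simp [e, hza.ne', haw]) ht ht'
  obtain ⟨Aw, hAw, hAw_verts, heAw⟩ := exists_starGraph_lineGraph_superset_erase_edgesAt hG hwb
    (e := e) (by simp [e]) (by simp [e, hwb.ne', hbz]) ht ht'
  calc G.lineGraph.structConn (_root_.starGraph t) ≤ ({Az, Aw} : Finset _).card := by
        refine lineGraph_structConn_le_card hzw ?_ ?_ ?_ ?_
        · simpa using ⟨hAz, hAw⟩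
        · simp only [mem_cutVerts, Finset.mem_insert, Finset.mem_singleton, exists_eq_or_imp,
            exists_eq_left, not_or]
          exact ⟨heAz, heAw⟩
        · exact hAz_verts.trans (verts_subset_cutVerts (by simp))
        · exact hAw_verts.trans (verts_subset_cutVerts (by simp))
    _ ≤ 2 := Finset.card_le_two

theorem lineGraph_structConn_starGraph_le_of_dvd (hG : G.IsRegularOfDegree d) (hzw : G.Adj z w)
    (hza : G.Adj z a) (hwb : G.Adj w b) (hab : G.Adj a b) (haw : a ≠ w) (hbz : b ≠ z)
    (ht : 2 ≤ t) (htd : t + 3 ≤ d) (hdvd : t + 1 ∣ d - 2) :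
    G.lineGraph.structConn (_root_.starGraph t) ≤ 2 * ((d - 2) / (t + 1)) + 1 := by
  classical
  set e : G.edgeSet := ⟨s(z, w), hzw⟩
  obtain ⟨Fz, hFz, hFz_star, hFz_verts⟩ := exists_starGraph_cover_erase_edgesAt_of_dvd hG hza
    (e := e) (by simp [e]) (by simp [e, Subtype.ext_iff, haw.symm, hza.ne]) htd hdvd
  obtain ⟨Fw, hFw, hFw_star, hFw_verts⟩ := exists_starGraph_cover_erase_edgesAt_of_dvd hG hwb
    (e := e) (by simp [e]) (by simp [e, Subtype.ext_iff, hbz.symm, hzw.ne]) htd hdvd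
  -- the extra star, centred at `ab`, picks up the two edges `za` and `wb` left out above
  obtain ⟨X, hX, hcz, hcw, hX_sup⟩ :=
    exists_starGraph_lineGraph_of_square hG hza hwb hab haw hbz ht (by omega)
  have heX : e ∉ X.verts := fun he => by
    simpa [e, Subtype.ext_iff, Sym2.eq_iff, hza.ne, hza.ne', hbz, hwb.ne', haw] using hX_sup he
  have hside : ∀ (K : Finset G.edgeSet) (c : G.edgeSet) (F : Finset G.lineGraph.Subgraph),
      c ∈ X.verts → cutVerts F = ↑((K.erase c).erase e) →
        ↑(K.erase e) ⊆ X.verts ∪ cutVerts F := by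
    intro K c F hc hF
    rw [hF, Finset.erase_right_comm]
    refine (Finset.coe_subset.2 (Finset.insert_erase_subset c _)).trans ?_
    rw [Finset.coe_insert]
    exact Set.insert_subset (Or.inl hc) Set.subset_union_right
  calc G.lineGraph.structConn (_root_.starGraph t) ≤ (insert X (Fz ∪ Fw)).card := by
        refine lineGraph_structConn_le_card hzw ?_ ?_ ?_ ?_
        · simpa [or_imp, forall_and] using ⟨hX, hFz_star, hFw_star⟩
        · simp only [cutVerts_insert, cutVerts_union, hFz_verts, hFw_verts, Set.mem_union,
            Finset.mem_coe, Finset.mem_erase, not_or]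
          exact ⟨heX, fun h => h.1 rfl, fun h => h.1 rfl⟩
        · refine (hside _ _ _ hcz hFz_verts).trans ?_
          rw [cutVerts_insert, cutVerts_union]
          exact Set.union_subset_union_right _ Set.subset_union_left
        · refine (hside _ _ _ hcw hFw_verts).trans ?_
          rw [cutVerts_insert, cutVerts_union]
          exact Set.union_subset_union_right _ Set.subset_union_right
    _ ≤ (Fz ∪ Fw).card + 1 := Finset.card_insert_le _ _
    _ ≤ Fz.card + Fw.card + 1 := by grw [Finset.card_union_le]
    _ ≤ 2 * ((d - 2) / (t + 1)) + 1 := by omega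

end Cases

end SimpleGraph

/-- For `n ≥ 4`, `2 ≤ t ≤ 2n - 3` and `r` the remainder of `n - 1` divided by `1 + t`:
`κ(B_n; K_{1,t}) ≤ (2n-4)/(1+t) + 1` if `2 ≤ t ≤ n - 3` and `r = 1`, and
`κ(B_n; K_{1,t}) ≤ 2⌈(n-1)/(1+t)⌉` otherwise. -/
theorem bcdc_star_structConn_upper (n t r : ℕ) (hn : 4 ≤ n) (ht1 : 2 ≤ t)
    (ht2 : t ≤ 2 * n - 3) (hr : r = (n - 1) % (1 + t)) :
    (t ≤ n - 3 ∧ r = 1 →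
      (BCDC n).structConn (_root_.starGraph t) ≤ (2 * n - 4) / (1 + t) + 1) ∧
    (¬ (t ≤ n - 3 ∧ r = 1) →
      (BCDC n).structConn (_root_.starGraph t) ≤ 2 * ((n - 1 + t) / (1 + t))) := by
  have hreg := crossedCube_isRegularOfDegree n
  obtain ⟨z, w, a, b, hzw, hza, hwb, hab, haw, hbz⟩ :=
    crossedCube_exists_square (by omega : 2 ≤ n)
  rw [add_comm 1 t] at hr ⊢
  refine ⟨fun ⟨ht3, hr1⟩ => ?_, fun _ => ?_⟩
  · have hdvd : t + 1 ∣ n - 2 := by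
      simpa [← hr, hr1, Nat.sub_sub] using Nat.dvd_sub_mod (n := t + 1) (n - 1)
    rw [show 2 * n - 4 = 2 * (n - 2) by omega, Nat.mul_div_assoc _ hdvd]
    exact lineGraph_structConn_starGraph_le_of_dvd hreg hzw hza hwb hab haw hbz ht1 (by omega) hdvd
  · rcases le_or_gt t (n - 2) with ht | ht
    · exact lineGraph_structConn_starGraph_le_of_adj hreg hzw (by omega)
    · rw [Nat.div_eq_of_lt_le (k := 1) (by omega) (by omega)]
      exact lineGraph_structConn_starGraph_le_two hreg hzw hza hwb haw hbz (by omega) ht2
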